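/- Let ≺ be a partial order on [n] satisfying: for all a < b < c, a ≺ c implies a ≺ b or b ≺ c. Then the relation obtained from ≺ by adding the pair (b,a) for every a < b incomparable in ≺ is a total order extending ≺, and it is the weak order maximal linear extension of ≺. -/

import Mathlib

/-- Increasing part of an integer binary relation. -/
def IncR {n : ℕ} (R : Set (Fin n × Fin n)) : Set (Fin n × Fin n) := {p | p ∈ R ∧ p.1 ≤ p.2}

/-- Decreasing part of an integer binary relation. -/
def DecR {n : ℕ} (R : Set (Fin n × Fin n)) : Set (Fin n × Fin n) := {p | p ∈ R ∧ p.2 ≤ p.1}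

/-- Reflexivity of a relation on `Fin n`. -/
def IsReflRel {n : ℕ} (R : Set (Fin n × Fin n)) : Prop := ∀ a : Fin n, (a, a) ∈ R

/-- Transitivity. -/
def IsTransRel {n : ℕ} (R : Set (Fin n × Fin n)) : Prop :=
  ∀ u v w : Fin n, (u, v) ∈ R → (v, w) ∈ R → (u, w) ∈ R

/-- Antisymmetry. -/
def IsAntisymRel {n : ℕ} (R : Set (Fin n × Fin n)) : Prop :=
  ∀ u v : Fin n, (u, v) ∈ R → (v, u) ∈ R → u = v

/-- The weak order on integer binary relations. -/
def WOLE {n : ℕ} (R S : Set (Fin n × Fin n)) : Prop := IncR S ⊆ IncR R ∧ DecR R ⊆ DecR S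

/-- Totality of a relation. -/
def IsTotalRel {n : ℕ} (R : Set (Fin n × Fin n)) : Prop :=
  ∀ u v : Fin n, (u, v) ∈ R ∨ (v, u) ∈ R

/-- The relation obtained from R by adding a decreasing relation between any two
incomparable elements. -/
def maxExt {n : ℕ} (R : Set (Fin n × Fin n)) : Set (Fin n × Fin n) :=
  R ∪ {p | p.2 < p.1 ∧ (p.1, p.2) ∉ R ∧ (p.2, p.1) ∉ R}

/-!
The added pairs are all decreasing, so `maxExt R` has the same increasing part as `R`, which
every linear extension contains; and a decreasing pair of a linear extension `L` cannot be
reversed in `R`, so it lies in `maxExt R`. The only substantial point is transitivity of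
`maxExt R`: composing a pair of `R` with an added pair (or two added pairs) could only fail
across an increasing triple `a < b < c` with `a ≺ c` but `a`, `b` and `b`, `c` incomparable,
which is exactly what the hypothesis on `R` forbids.
-/

section MaxExt

variable {n : ℕ} {R : Set (Fin n × Fin n)}

lemma mem_maxExt_of_swap_notMem (hrefl : IsReflRel R) {u w : Fin n}
    (hwu : (w, u) ∉ R) (hlt : u < w → (u, w) ∈ R) : (u, w) ∈ maxExt R := by
  by_cases huw : (u, w) ∈ R
  · exact Or.inl huw
  rcases lt_trichotomy u w with h | rfl | h
  · exact absurd (hlt h) huw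
  · exact absurd (hrefl u) huw
  · exact Or.inr ⟨h, huw, hwu⟩

lemma maxExt_isTotalRel (hrefl : IsReflRel R) : IsTotalRel (maxExt R) := by
  intro u v
  by_cases hvu : (v, u) ∈ R
  · exact Or.inr (Or.inl hvu)
  by_cases huv : (u, v) ∈ R
  · exact Or.inl (Or.inl huv)
  rcases le_total v u with h | h
  · exact Or.inl (mem_maxExt_of_swap_notMem hrefl hvu fun h' => absurd h h'.not_ge)
  · exact Or.inr (mem_maxExt_of_swap_notMem hrefl huv fun h' => absurd h h'.not_ge)

section Trans

variable (hrefl : IsReflRel R) (htrans : IsTransRel R)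
  (hIW : ∀ a b c : Fin n, a < b → b < c → (a, c) ∈ R → (a, b) ∈ R ∨ (b, c) ∈ R)
include hrefl

include htrans hIW in
lemma maxExt_trans_of_mem_left {u v w : Fin n} (huv : (u, v) ∈ R)
    (hwv : w < v) (hwv' : (w, v) ∉ R) : (u, w) ∈ maxExt R :=
  mem_maxExt_of_swap_notMem hrefl (fun hwu => hwv' (htrans w u v hwu huv))
    fun huw => (hIW u w v huw hwv huv).resolve_right hwv'

include htrans hIW in
lemma maxExt_trans_of_mem_right {u v w : Fin n} (hvu : v < u) (hvu' : (v, u) ∉ R)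
    (hvw : (v, w) ∈ R) : (u, w) ∈ maxExt R :=
  mem_maxExt_of_swap_notMem hrefl (fun hwu => hvu' (htrans v w u hvw hwu))
    fun huw => (hIW v u w hvu huw hvw).resolve_left hvu'

include hIW in
lemma maxExt_trans_of_notMem {u v w : Fin n} (hvu : v < u) (hvu' : (v, u) ∉ R)
    (hwv : w < v) (hwv' : (w, v) ∉ R) : (u, w) ∈ maxExt R :=
  mem_maxExt_of_swap_notMem hrefl (fun hwu => (hIW w v u hwv hvu hwu).elim hwv' hvu')
    fun huw => absurd (hwv.trans hvu) huw.not_gt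

include htrans hIW in
lemma maxExt_isTransRel : IsTransRel (maxExt R) := by
  rintro u v w (huv | ⟨hvu, -, hvu'⟩) (hvw | ⟨hwv, -, hwv'⟩)
  · exact Or.inl (htrans u v w huv hvw)
  · exact maxExt_trans_of_mem_left hrefl htrans hIW huv hwv hwv'
  · exact maxExt_trans_of_mem_right hrefl htrans hIW hvu hvu' hvw
  · exact maxExt_trans_of_notMem hrefl hIW hvu hvu' hwv hwv'

end Trans

lemma maxExt_isAntisymRel (hanti : IsAntisymRel R) : IsAntisymRel (maxExt R) := by
  rintro u v (huv | ⟨hvu, -, hvu'⟩) (hvu'' | ⟨huv', -, huv''⟩)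
  · exact hanti u v huv hvu''
  · exact absurd huv huv''
  · exact absurd hvu'' hvu'
  · exact absurd huv' hvu.not_gt

lemma incR_maxExt : IncR (maxExt R) = IncR R := by
  ext ⟨u, v⟩
  constructor
  · rintro ⟨huv | ⟨hvu, -⟩, hle⟩
    · exact ⟨huv, hle⟩
    · exact absurd hle hvu.not_ge
  · rintro ⟨huv, hle⟩
    exact ⟨Or.inl huv, hle⟩

lemma wole_maxExt (hrefl : IsReflRel R) {L : Set (Fin n × Fin n)} (hLanti : IsAntisymRel L)
    (hRL : R ⊆ L) : WOLE L (maxExt R) := by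
  refine ⟨?_, ?_⟩
  · rw [incR_maxExt]
    exact fun p hp => ⟨hRL hp.1, hp.2⟩
  rintro ⟨u, v⟩ ⟨huv, hle : v ≤ u⟩
  refine ⟨?_, hle⟩
  rcases hle.eq_or_lt with rfl | hvu
  · exact Or.inl (hrefl v)
  · exact mem_maxExt_of_swap_notMem hrefl (fun h => hvu.ne (hLanti u v huv (hRL h)).symm)
      fun h => absurd h hvu.not_gt

end MaxExt

/-- For a poset satisfying the IWOIP condition, adding (b,a) for every
incomparable pair a < b yields a total order which is the weak order maximal
linear extension of the poset. -/
theorem maxExt_is_maximal_linear_extension (n : ℕ) (R : Set (Fin n × Fin n))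
    (hrefl : IsReflRel R) (htrans : IsTransRel R) (hanti : IsAntisymRel R)
    (hIW : ∀ a b c : Fin n, a < b → b < c → (a, c) ∈ R → (a, b) ∈ R ∨ (b, c) ∈ R) :
    IsTotalRel (maxExt R) ∧ IsTransRel (maxExt R) ∧ IsAntisymRel (maxExt R) ∧
    R ⊆ maxExt R ∧
    (∀ L : Set (Fin n × Fin n), IsTotalRel L → IsTransRel L → IsAntisymRel L →
      R ⊆ L → WOLE L (maxExt R)) :=
  ⟨maxExt_isTotalRel hrefl, maxExt_isTransRel hrefl htrans hIW, maxExt_isAntisymRel hanti,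
    Set.subset_union_left, fun _ _ _ hLanti hRL => wole_maxExt hrefl hLanti hRL⟩
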